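/- arXiv:1112.2972 — 3 statements merged into one kernel-verified Lean document; each statement's English description precedes it below -/
import Mathlib

section
/- Let f_1,…,f_N: ℝ^d → ℝ each be convex and differentiable with L-Lipschitz gradient, let f = ∑_{i=1}^N f_i, let y_1,…,y_N ∈ ℝ^d with average ȳ = (1/N)∑_i y_i. Define f̂ = ∑_i (f_i(y_i) + ∇f_i(y_i)·(ȳ − y_i)) and ĝ = ∑_i ∇f_i(y_i). Then for all x ∈ ℝ^d: f̂ + ĝ·(x−ȳ) ≤ f(x) ≤ f̂ + ĝ·(x−ȳ) + (2NL/2)‖x−ȳ‖² + L ∑_i ‖ȳ − y_i‖². -/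
/-!
Each `f i` lies above its tangent plane at `y i` by convexity, and below that plane plus
`L / 2 * ‖x - y i‖ ^ 2` because `t ↦ f (y + t (x - y)) - t ⟪∇f y, x - y⟫ - L t² ‖x - y‖² / 2`
has nonpositive derivative for `t ≥ 0`. Summed, the tangent planes re-centre at `ȳ` to
`f̂ + ⟪ĝ, x - ȳ⟫`, and `‖x - y i‖² ≤ 2 ‖x - ȳ‖² + 2 ‖ȳ - y i‖²` gives the error term.
-/

open scoped RealInnerProductSpace
open AffineMap

section Gradient

variable {E : Type*} [NormedAddCommGroup E] [InnerProductSpace ℝ E] [CompleteSpace E]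
  {f : E → ℝ} {g : E → E} {g' x y : E}

theorem HasGradientAt.hasDerivAt_comp_lineMap {t : ℝ} (h : HasGradientAt f g' (lineMap y x t)) :
    HasDerivAt (f ∘ lineMap y x) ⟪g', x - y⟫ t := by
  simpa using h.hasFDerivAt.comp_hasDerivAt t hasDerivAt_lineMap

theorem ConvexOn.add_inner_sub_le_of_hasGradientAt {s : Set E} (hf : ConvexOn ℝ s f)
    (hy : y ∈ s) (hx : x ∈ s) (h : HasGradientAt f g' y) :
    f y + ⟪g', x - y⟫ ≤ f x := by
  have hslope := (hf.comp_affineMap (lineMap y x)).le_slope_of_hasDerivAt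
    (by simpa using hy) (by simpa using hx) zero_lt_one
    (HasGradientAt.hasDerivAt_comp_lineMap (by simpa using h))
  simp only [slope_def_field, Function.comp_apply, lineMap_apply_zero, lineMap_apply_one] at hslope
  linarith

theorem le_add_inner_sub_add_half_mul_norm_sq_of_hasGradientAt {L : ℝ}
    (hgrad : ∀ z, HasGradientAt f (g z) z) (hlip : ∀ z, ‖g z - g y‖ ≤ L * ‖z - y‖) :
    f x ≤ f y + ⟪g y, x - y⟫ + L / 2 * ‖x - y‖ ^ 2 := by
  set φ : ℝ → ℝ := fun t ↦ f (lineMap y x t) - t * ⟪g y, x - y⟫ - L / 2 * t ^ 2 * ‖x - y‖ ^ 2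
  have hφ : ∀ t, HasDerivAt φ (⟪g (lineMap y x t) - g y, x - y⟫ - L * t * ‖x - y‖ ^ 2) t := by
    intro t
    have hline := (hgrad (lineMap y x t)).hasDerivAt_comp_lineMap
    have hlin := (hasDerivAt_id t).mul_const ⟪g y, x - y⟫
    have hquad := ((hasDerivAt_pow 2 t).const_mul (L / 2)).mul_const (‖x - y‖ ^ 2)
    refine ((hline.sub hlin).sub hquad).congr_deriv ?_
    rw [inner_sub_left]
    ring
  have hφ' : ∀ t, 0 ≤ t → ⟪g (lineMap y x t) - g y, x - y⟫ - L * t * ‖x - y‖ ^ 2 ≤ 0 := by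
    intro t ht
    have hsub : lineMap y x t - y = t • (x - y) := lineMap_vsub_left y x t
    calc ⟪g (lineMap y x t) - g y, x - y⟫ - L * t * ‖x - y‖ ^ 2
        ≤ ‖g (lineMap y x t) - g y‖ * ‖x - y‖ - L * t * ‖x - y‖ ^ 2 := by
          gcongr; exact real_inner_le_norm _ _
      _ ≤ L * ‖lineMap y x t - y‖ * ‖x - y‖ - L * t * ‖x - y‖ ^ 2 := by
          gcongr; exact hlip _
      _ = 0 := by rw [hsub, norm_smul, Real.norm_of_nonneg ht]; ring
  have hanti : AntitoneOn φ (Set.Ici 0) :=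
    antitoneOn_of_hasDerivWithinAt_nonpos (convex_Ici 0)
      (fun t _ ↦ (hφ t).continuousAt.continuousWithinAt)
      (fun t _ ↦ (hφ t).hasDerivWithinAt)
      (fun t ht ↦ hφ' t (by simpa using ht : (0 : ℝ) < t).le)
  have := hanti Set.self_mem_Ici (Set.mem_Ici.2 zero_le_one) zero_le_one
  simp only [φ, lineMap_apply_zero, lineMap_apply_one] at this
  linarith

end Gradient

theorem norm_sub_sq_le_two_mul {E : Type*} [SeminormedAddGroup E] (a b c : E) :
    ‖a - c‖ ^ 2 ≤ 2 * (‖a - b‖ ^ 2 + ‖b - c‖ ^ 2) :=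
  (pow_le_pow_left₀ (norm_nonneg _) (norm_sub_le_norm_sub_add_norm_sub a b c) 2).trans add_sq_le

theorem sum_inexact_oracle_general
    {d N : ℕ}
    (f : Fin N → EuclideanSpace ℝ (Fin d) → ℝ)
    (g : Fin N → EuclideanSpace ℝ (Fin d) → EuclideanSpace ℝ (Fin d))
    (L : ℝ) (hL : 0 ≤ L)
    (hconv : ∀ i, ConvexOn ℝ Set.univ (f i))
    (hgrad : ∀ i x, HasGradientAt (f i) (g i x) x)
    (hlip : ∀ i x y, ‖g i x - g i y‖ ≤ L * ‖x - y‖)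
    (y : Fin N → EuclideanSpace ℝ (Fin d)) :
    let ybar := (N : ℝ)⁻¹ • ∑ i, y i
    let fhat := ∑ i, (f i (y i) + ⟪g i (y i), ybar - y i⟫)
    let ghat := ∑ i, g i (y i)
    ∀ x, fhat + ⟪ghat, x - ybar⟫ ≤ (∑ i, f i x) ∧
      (∑ i, f i x) ≤ fhat + ⟪ghat, x - ybar⟫
        + (2 * (N : ℝ) * L / 2) * ‖x - ybar‖ ^ 2 + L * ∑ i, ‖ybar - y i‖ ^ 2 := by
  intro ybar fhat ghat x
  have hmodel : fhat + ⟪ghat, x - ybar⟫ = ∑ i, (f i (y i) + ⟪g i (y i), x - y i⟫) := by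
    simp only [fhat, ghat, sum_inner, ← Finset.sum_add_distrib, add_assoc, ← inner_add_right,
      sub_add_sub_cancel']
  refine ⟨hmodel ▸ Finset.sum_le_sum fun i _ ↦ (hconv i).add_inner_sub_le_of_hasGradientAt
    (Set.mem_univ _) (Set.mem_univ _) (hgrad i _), ?_⟩
  calc ∑ i, f i x ≤ ∑ i, (f i (y i) + ⟪g i (y i), x - y i⟫ + L / 2 * ‖x - y i‖ ^ 2) :=
        Finset.sum_le_sum fun i _ ↦
          le_add_inner_sub_add_half_mul_norm_sq_of_hasGradientAt (hgrad i) (hlip i · _)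
    _ ≤ ∑ i, (f i (y i) + ⟪g i (y i), x - y i⟫
          + L / 2 * (2 * (‖x - ybar‖ ^ 2 + ‖ybar - y i‖ ^ 2))) := by
        gcongr with i; exact norm_sub_sq_le_two_mul _ _ _
    _ = fhat + ⟪ghat, x - ybar⟫
          + (2 * (N : ℝ) * L / 2) * ‖x - ybar‖ ^ 2 + L * ∑ i, ‖ybar - y i‖ ^ 2 := by
        rw [hmodel]
        simp only [mul_add, show ∀ a : ℝ, L / 2 * (2 * a) = L * a from fun a ↦ by ring,
          Finset.sum_add_distrib, Finset.sum_const, Finset.card_univ,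
          Fintype.card_fin, nsmul_eq_mul, Finset.mul_sum]
        ring

theorem sum_inexact_oracle
    {d N : ℕ} (hN : 0 < N)
    (f : Fin N → EuclideanSpace ℝ (Fin d) → ℝ)
    (g : Fin N → EuclideanSpace ℝ (Fin d) → EuclideanSpace ℝ (Fin d))
    (L : ℝ) (hL : 0 ≤ L)
    (hconv : ∀ i, ConvexOn ℝ Set.univ (f i))
    (hgrad : ∀ i x, HasGradientAt (f i) (g i x) x)
    (hlip : ∀ i x y, ‖g i x - g i y‖ ≤ L * ‖x - y‖)
    (y : Fin N → EuclideanSpace ℝ (Fin d)) :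
    let ybar := (N : ℝ)⁻¹ • ∑ i, y i
    let fhat := ∑ i, (f i (y i) + ⟪g i (y i), ybar - y i⟫)
    let ghat := ∑ i, g i (y i)
    ∀ x, fhat + ⟪ghat, x - ybar⟫ ≤ (∑ i, f i x) ∧
      (∑ i, f i x) ≤ fhat + ⟪ghat, x - ybar⟫
        + (2 * (N : ℝ) * L / 2) * ‖x - ybar‖ ^ 2 + L * ∑ i, ‖ybar - y i‖ ^ 2 :=
  sum_inexact_oracle_general f g L hL hconv hgrad hlip y
end

section
/- For any real r ∈ (0,1) and any integer k ≥ 1, ∑_{t=0}^{k-1} r^{k-(t+1)} / (t+1) ≤ (2 B(r) + 7/(1−r²)) · (1/k), where B(r) = sup_{z ≥ 1/2} z r^z log(1+z) (a finite quantity). -/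
/-!
Split the sum at `t = k / 2`. For `t ≥ k / 2` the weight `1 / (t + 1)` is at most `2 / k` and the
geometric factors sum to at most `1 / (1 - r)`. For `t < k / 2` the exponent `k - (t + 1)` is at
least `k / 2`; apart from the term `t = 0`, which is at most `1 / (k (1 - r))`, these terms add up to
at most `r ^ (k / 2) * log (1 + k / 2)`, and this is `≤ 2 B / k` by evaluating the supremum
`B` at `z = k / 2`.
-/

open Finset Real

section

variable {r : ℝ}

theorem succ_mul_pow_mul_one_sub_le_one (hr0 : 0 ≤ r) (hr1 : r ≤ 1) (n : ℕ) :
    ((n : ℝ) + 1) * r ^ n * (1 - r) ≤ 1 := by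
  have hsum : ((n : ℝ) + 1) * r ^ n ≤ ∑ j ∈ range (n + 1), r ^ j := by
    calc ((n : ℝ) + 1) * r ^ n = ∑ _j ∈ range (n + 1), r ^ n := by simp
      _ ≤ ∑ j ∈ range (n + 1), r ^ j := sum_le_sum fun j hj =>
          pow_le_pow_of_le_one hr0 hr1 (Nat.le_of_lt_succ (mem_range.mp hj))
  calc ((n : ℝ) + 1) * r ^ n * (1 - r) ≤ (∑ j ∈ range (n + 1), r ^ j) * (1 - r) :=
        mul_le_mul_of_nonneg_right hsum (sub_nonneg.2 hr1)
    _ = 1 - r ^ (n + 1) := geom_sum_mul_neg r (n + 1)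
    _ ≤ 1 := sub_le_self _ (pow_nonneg hr0 _)

theorem pow_pred_le_one_div_mul_one_sub (hr0 : 0 ≤ r) (hr1 : r < 1) {k : ℕ} (hk : 1 ≤ k) :
    r ^ (k - 1) ≤ 1 / (k * (1 - r)) := by
  have h := succ_mul_pow_mul_one_sub_le_one hr0 hr1.le (k - 1)
  rw [Nat.cast_sub hk, Nat.cast_one, sub_add_cancel] at h
  rw [le_div_iff₀ (mul_pos (by positivity) (sub_pos.2 hr1))]
  linarith

theorem sum_range_inv_add_two_le_log (n : ℕ) :
    ∑ i ∈ range n, ((i : ℝ) + 2)⁻¹ ≤ log (n + 1) := by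
  have h := harmonic_le_one_add_log (n + 1)
  simp only [harmonic, sum_range_succ', Rat.cast_add, Rat.cast_sum, Rat.cast_inv] at h
  push_cast at h
  simp only [add_assoc, one_add_one_eq_two, inv_one] at h
  linarith

theorem sum_Ico_half_pow_div_le (hr0 : 0 ≤ r) (hr1 : r < 1) (k : ℕ) :
    ∑ t ∈ Ico (k / 2) k, r ^ (k - (t + 1)) / (t + 1 : ℝ) ≤ 2 / (k * (1 - r)) := by
  have hterm : ∀ t ∈ Ico (k / 2) k, r ^ (k - (t + 1)) / (t + 1 : ℝ) ≤ 2 / k * r ^ (k - 1 - t) := by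
    intro t ht
    obtain ⟨htk, htk'⟩ := mem_Ico.mp ht
    have hk : (0 : ℝ) < k := by exact_mod_cast (Nat.zero_le t).trans_lt htk'
    have hk2 : (k : ℝ) ≤ 2 * (t + 1) := by exact_mod_cast (by omega : k ≤ 2 * (t + 1))
    rw [show k - 1 - t = k - (t + 1) by omega, div_eq_mul_one_div, mul_comm]
    refine mul_le_mul_of_nonneg_right ?_ (pow_nonneg hr0 _)
    rw [div_le_div_iff₀ (by positivity) hk]
    linarith
  calc ∑ t ∈ Ico (k / 2) k, r ^ (k - (t + 1)) / (t + 1 : ℝ)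
      ≤ ∑ t ∈ range k, 2 / k * r ^ (k - 1 - t) := by
        refine (sum_le_sum hterm).trans (sum_le_sum_of_subset_of_nonneg ?_ fun _ _ _ => ?_)
        · rw [range_eq_Ico]; exact Ico_subset_Ico_left (Nat.zero_le _)
        · positivity
    _ = 2 / k * ∑ j ∈ range k, r ^ j := by rw [← mul_sum, sum_range_reflect (fun j => r ^ j) k]
    _ ≤ 2 / k * (r ^ 0 / (1 - r)) := by
        gcongr; rw [range_eq_Ico]; exact geom_sum_Ico_le_of_lt_one hr0 hr1
    _ = 2 / (k * (1 - r)) := by field_simp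

theorem sum_range_half_pow_div_le (hr0 : 0 < r) (hr1 : r ≤ 1) (k : ℕ) :
    ∑ t ∈ range (k / 2), r ^ (k - (t + 1)) / (t + 1 : ℝ) ≤
      r ^ (k - 1) + r ^ ((k : ℝ) / 2) * log (1 + k / 2) := by
  rcases Nat.eq_zero_or_pos (k / 2) with hm | hm
  · rw [hm, sum_range_zero]
    have : 0 ≤ log (1 + k / 2 : ℝ) := log_nonneg (le_add_of_nonneg_right (by positivity))
    positivity
  obtain ⟨n, hn⟩ := Nat.exists_eq_add_one_of_ne_zero hm.ne'
  have hhalf : ((n + 1 : ℕ) : ℝ) ≤ k / 2 := hn ▸ Nat.cast_div_le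
  rw [hn, sum_range_succ', add_comm]
  gcongr
  · simp
  calc ∑ i ∈ range n, r ^ (k - (i + 1 + 1)) / ((i + 1 : ℕ) + 1 : ℝ)
      ≤ ∑ i ∈ range n, r ^ ((k : ℝ) / 2) / ((i : ℝ) + 2) := by
        refine sum_le_sum fun i hi => ?_
        have hi : i + 1 + 1 ≤ n + 1 := by have := mem_range.mp hi; omega
        have hexp : (k : ℝ) / 2 ≤ ((k - (i + 1 + 1) : ℕ) : ℝ) := by
          have := (Nat.cast_le (α := ℝ)).2 hi
          rw [Nat.cast_sub (by omega)]; push_cast at this hhalf ⊢; linarith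
        have hden : ((i + 1 : ℕ) : ℝ) + 1 = (i : ℝ) + 2 := by push_cast; ring
        rw [hden, ← rpow_natCast]
        exact div_le_div_of_nonneg_right (rpow_le_rpow_of_exponent_ge hr0 hr1 hexp) (by positivity)
    _ = r ^ ((k : ℝ) / 2) * ∑ i ∈ range n, ((i : ℝ) + 2)⁻¹ := by
        simp only [div_eq_mul_inv, mul_sum]
    _ ≤ r ^ ((k : ℝ) / 2) * log (1 + k / 2) := by
        gcongr
        refine (sum_range_inv_add_two_le_log n).trans (log_le_log (by positivity) ?_)
        push_cast at hhalf; linarith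

theorem mul_rpow_mul_log_one_add_le (hr0 : 0 < r) (hr1 : r < 1) {z : ℝ} (hz : 0 < z) :
    z * r ^ z * log (1 + z) ≤ 6 / ((-log r) ^ 3 * z) := by
  set a := -log r
  have ha : 0 < a := neg_pos.2 (log_neg hr0 hr1)
  have hexp : (a * z) ^ 3 / 6 ≤ exp (a * z) := by
    simpa [Nat.factorial] using pow_div_factorial_le_exp (a * z) (by positivity) 3
  have hrz : r ^ z = (exp (a * z))⁻¹ := by
    rw [rpow_def_of_pos hr0, ← exp_neg]; congr 1; simp only [a]; ring
  calc z * r ^ z * log (1 + z) ≤ z * r ^ z * z := by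
        gcongr; linarith [log_le_sub_one_of_pos (by linarith : 0 < 1 + z)]
    _ = z ^ 2 * (exp (a * z))⁻¹ := by rw [hrz]; ring
    _ ≤ z ^ 2 * ((a * z) ^ 3 / 6)⁻¹ := by gcongr
    _ = 6 / (a ^ 3 * z) := by field_simp

theorem bddAbove_mul_rpow_mul_log_one_add (hr0 : 0 < r) (hr1 : r < 1) :
    BddAbove ((fun z : ℝ => z * r ^ z * log (1 + z)) '' {z : ℝ | 1 / 2 ≤ z}) := by
  have ha : 0 < (-log r) ^ 3 := pow_pos (neg_pos.2 (log_neg hr0 hr1)) 3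
  refine ⟨12 / (-log r) ^ 3, ?_⟩
  rintro _ ⟨z, hz : 1 / 2 ≤ z, rfl⟩
  calc _ ≤ 6 / ((-log r) ^ 3 * z) := mul_rpow_mul_log_one_add_le hr0 hr1 (by linarith)
    _ ≤ 12 / (-log r) ^ 3 := by
        rw [div_le_div_iff₀ (by positivity) ha]; nlinarith

theorem le_sSup_mul_rpow_mul_log_one_add (hr0 : 0 < r) (hr1 : r < 1) {z : ℝ} (hz : 1 / 2 ≤ z) :
    z * r ^ z * log (1 + z) ≤ sSup ((fun z : ℝ => z * r ^ z * log (1 + z)) '' {z : ℝ | 1 / 2 ≤ z}) :=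
  le_csSup (bddAbove_mul_rpow_mul_log_one_add hr0 hr1) ⟨z, hz, rfl⟩

theorem sSup_mul_rpow_mul_log_one_add_nonneg (hr0 : 0 < r) (hr1 : r < 1) :
    0 ≤ sSup ((fun z : ℝ => z * r ^ z * log (1 + z)) '' {z : ℝ | 1 / 2 ≤ z}) := by
  refine le_trans ?_ (le_sSup_mul_rpow_mul_log_one_add hr0 hr1 le_rfl)
  have := log_nonneg (by norm_num : (1 : ℝ) ≤ 1 + 1 / 2)
  positivity

theorem rpow_half_mul_log_le_sSup (hr0 : 0 < r) (hr1 : r < 1) {k : ℕ} (hk : 1 ≤ k) :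
    r ^ ((k : ℝ) / 2) * log (1 + k / 2) ≤
      2 * sSup ((fun z : ℝ => z * r ^ z * log (1 + z)) '' {z : ℝ | 1 / 2 ≤ z}) / k := by
  have hk' : (1 : ℝ) ≤ k := by exact_mod_cast hk
  rw [le_div_iff₀ (by positivity)]
  linarith [le_sSup_mul_rpow_mul_log_one_add hr0 hr1 (z := k / 2) (by linarith)]

end

theorem geometric_harmonic_convolution_bound
    (r : ℝ) (hr : r ∈ Set.Ioo (0 : ℝ) 1) (k : ℕ) (hk : 1 ≤ k) :
    ∑ t ∈ Finset.range k, r ^ (k - (t + 1)) / (t + 1 : ℝ) ≤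
      (2 * sSup ((fun z : ℝ => z * r ^ z * Real.log (1 + z)) '' {z : ℝ | 1 / 2 ≤ z})
        + 7 / (1 - r ^ 2)) * (1 / (k : ℝ)) := by
  obtain ⟨hr0, hr1⟩ := hr
  have hB := sSup_mul_rpow_mul_log_one_add_nonneg hr0 hr1
  set B := sSup ((fun z : ℝ => z * r ^ z * log (1 + z)) '' {z : ℝ | 1 / 2 ≤ z})
  have hr2 : 3 / (1 - r) ≤ 7 / (1 - r ^ 2) := by
    rw [div_le_div_iff₀ (sub_pos.2 hr1) (by nlinarith)]
    nlinarith
  rw [← sum_range_add_sum_Ico _ (Nat.div_le_self k 2)]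
  calc _ ≤ r ^ (k - 1) + r ^ ((k : ℝ) / 2) * log (1 + k / 2) + 2 / (k * (1 - r)) :=
        add_le_add (sum_range_half_pow_div_le hr0 hr1.le k) (sum_Ico_half_pow_div_le hr0.le hr1 k)
    _ ≤ 1 / (k * (1 - r)) + 2 * B / k + 2 / (k * (1 - r)) := by
        gcongr
        exacts [pow_pred_le_one_div_mul_one_sub hr0.le hr1 hk, rpow_half_mul_log_le_sSup hr0 hr1 hk]
    _ = (2 * B + 3 / (1 - r)) * (1 / k) := by field_simp; ring
    _ ≤ (2 * B + 7 / (1 - r ^ 2)) * (1 / k) := by gcongr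
end

section
/- Consider the scalar recursion x(k) = (1/2 − α_{k−1}) x(k−1) + α_{k−1} θ for k ≥ 1 with x(0) = 0, θ > 0 and α_{k−1} = c/k^τ with c ∈ (0, 1/2], τ ≥ 0. Then x(k) ≥ α_{k−1} θ for all k ≥ 1, and consequently x(k)² ≥ c²θ²/k^{2τ}. -/
theorem nedic_hard_instance_lower_bound
    (x : ℕ → ℝ) (θ c τ : ℝ)
    (hθ : 0 < θ) (hc : c ∈ Set.Ioc (0 : ℝ) (1 / 2)) (hτ : 0 ≤ τ)
    (hx0 : x 0 = 0)
    (hrec : ∀ k : ℕ, 1 ≤ k →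
      x k = (1 / 2 - c / (k : ℝ) ^ τ) * x (k - 1) + (c / (k : ℝ) ^ τ) * θ) :
    ∀ k : ℕ, 1 ≤ k →
      (c / (k : ℝ) ^ τ) * θ ≤ x k ∧ c ^ 2 * θ ^ 2 / (k : ℝ) ^ (2 * τ) ≤ (x k) ^ 2 := by
  obtain ⟨hc0, hc2⟩ := hc
  have hpow : ∀ k : ℕ, 1 ≤ k → (1 : ℝ) ≤ (k : ℝ) ^ τ := by
    intro k hk
    exact Real.one_le_rpow (by exact_mod_cast hk) hτ
  have hα : ∀ k : ℕ, 1 ≤ k → 0 < c / (k : ℝ) ^ τ ∧ c / (k : ℝ) ^ τ ≤ 1 / 2 := by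
    intro k hk
    have h1 := hpow k hk
    constructor
    · exact div_pos hc0 (by linarith)
    · calc c / (k : ℝ) ^ τ ≤ c / 1 := by
            apply div_le_div_of_nonneg_left hc0.le one_pos h1
          _ ≤ 1 / 2 := by linarith
  have hnonneg : ∀ k : ℕ, 0 ≤ x k := by
    intro k
    induction k with
    | zero => simp [hx0]
    | succ n ih =>
      have hk : 1 ≤ n + 1 := Nat.le_add_left 1 n
      rw [hrec (n + 1) hk]
      obtain ⟨hα1, hα2⟩ := hα (n + 1) hk
      have : (0 : ℝ) ≤ 1 / 2 - c / ((n + 1 : ℕ) : ℝ) ^ τ := by linarith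
      simp only [Nat.add_sub_cancel]
      positivity
  intro k hk
  obtain ⟨hα1, hα2⟩ := hα k hk
  have hmain : (c / (k : ℝ) ^ τ) * θ ≤ x k := by
    rw [hrec k hk]
    nlinarith [hnonneg (k - 1)]
  refine ⟨hmain, ?_⟩
  have hsq : (k : ℝ) ^ (2 * τ) = ((k : ℝ) ^ τ) ^ 2 := by
    rw [mul_comm, Real.rpow_mul (by positivity), Real.rpow_two]
  have h1 : c ^ 2 * θ ^ 2 / (k : ℝ) ^ (2 * τ) = ((c / (k : ℝ) ^ τ) * θ) ^ 2 := by
    rw [hsq]; ring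
  rw [h1]
  have hpos : 0 ≤ (c / (k : ℝ) ^ τ) * θ := by positivity
  nlinarith
end
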